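/- arXiv:1707.06506 — 3 statements merged into one kernel-verified Lean document; each statement's English description precedes it below -/
import Mathlib

section
/- Let R be a (unital, associative) ring, let e ∈ R be an idempotent, and let M, N be simple left R-modules with e•M ≠ 0 and e•N ≠ 0. Suppose there exists an additive bijection φ from e•M onto e•N satisfying φ((e*r*e)•x) = (e*r*e)•φ(x) for all r ∈ R and all x ∈ e•M. Then M and N are isomorphic as R-modules. -/
/-- Let `R` be a unital associative ring, `e` an idempotent, and `M`, `N` simple left
`R`-modules with `e•M ≠ 0` and `e•N ≠ 0`. If there is an additive bijection `φ` from
`e•M` onto `e•N` commuting with the action of the corner ring `eRe`, then `M ≅ N`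
as `R`-modules. -/
theorem simple_module_iso_of_corner_iso {R : Type*} [Ring R]
    {M N : Type*} [AddCommGroup M] [Module R M] [AddCommGroup N] [Module R N]
    (e : R) (he : e * e = e)
    (hM : IsSimpleModule R M) (hN : IsSimpleModule R N)
    (heM : ∃ m : M, e • m ≠ 0) (heN : ∃ n : N, e • n ≠ 0)
    (φ : M → N)
    (hmem : ∀ x : M, e • x = x → e • φ x = φ x)
    (hadd : ∀ x y : M, e • x = x → e • y = y → φ (x + y) = φ x + φ y)
    (hinj : ∀ x y : M, e • x = x → e • y = y → φ x = φ y → x = y)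
    (hsurj : ∀ n : N, e • n = n → ∃ x : M, e • x = x ∧ φ x = n)
    (hequiv : ∀ (r : R) (x : M), e • x = x → φ ((e * r * e) • x) = (e * r * e) • φ x) :
    Nonempty (M ≃ₗ[R] N) := by
  haveI := hM; haveI := hN
  obtain ⟨m, hm⟩ := heM
  set m₀ : M := e • m with hm₀def
  have hm₀ : m₀ ≠ 0 := hm
  have hem₀ : e • m₀ = m₀ := by rw [hm₀def, smul_smul, he]
  set n₀ : N := φ m₀ with hn₀def
  have hen₀ : e • n₀ = n₀ := hmem m₀ hem₀
  have hφ0 : φ 0 = 0 := by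
    have h := hadd 0 0 (smul_zero e) (smul_zero e)
    rw [add_zero] at h
    exact (left_eq_add.mp h)
  have hn₀ : n₀ ≠ 0 := by
    intro h
    exact hm₀ (hinj m₀ 0 hem₀ (smul_zero e) (by rw [← hn₀def, h, hφ0]))
  -- key: annihilator of m₀ annihilates n₀
  have key : ∀ r : R, r • m₀ = 0 → r • n₀ = 0 := by
    intro r hr
    by_contra h
    have hspan : Submodule.span R {r • n₀} = ⊤ := by
      rcases eq_bot_or_eq_top (Submodule.span R {r • n₀}) with hb | ht
      · exact absurd (Submodule.span_singleton_eq_bot.mp hb) h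
      · exact ht
    have hmem' : n₀ ∈ Submodule.span R {r • n₀} := hspan ▸ Submodule.mem_top
    obtain ⟨s, hs⟩ := Submodule.mem_span_singleton.mp hmem'
    have h1 : (e * (s * r) * e) • n₀ = n₀ := by
      calc (e * (s * r) * e) • n₀ = (e * (s * r)) • (e • n₀) := mul_smul _ _ _
        _ = e • (s • (r • n₀)) := by rw [hen₀, mul_smul, mul_smul]
        _ = e • n₀ := by rw [hs]
        _ = n₀ := hen₀
    have h2 : (e * (s * r) * e) • m₀ = 0 := by
      calc (e * (s * r) * e) • m₀ = (e * (s * r)) • (e • m₀) := mul_smul _ _ _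
        _ = e • (s • (r • m₀)) := by rw [hem₀, mul_smul, mul_smul]
        _ = 0 := by rw [hr, smul_zero, smul_zero]
    have := hequiv (s * r) m₀ hem₀
    rw [h2, hφ0, ← hn₀def, h1] at this
    exact hn₀ this.symm
  -- the graph submodule
  set G : Submodule R (M × N) := Submodule.span R {(m₀, n₀)} with hGdef
  have hmemG : (m₀, n₀) ∈ G := Submodule.mem_span_singleton_self _
  set p1 : G →ₗ[R] M := (LinearMap.fst R M N).domRestrict G with hp1
  set p2 : G →ₗ[R] N := (LinearMap.snd R M N).domRestrict G with hp2
  have hinj1 : Function.Injective p1 := by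
    rw [← LinearMap.ker_eq_bot, eq_bot_iff]
    rintro ⟨x, hx⟩ hker
    obtain ⟨r, hr⟩ := Submodule.mem_span_singleton.mp hx
    simp only [LinearMap.mem_ker, hp1, LinearMap.domRestrict_apply,
      LinearMap.fst_apply] at hker
    have hx1 : x.1 = r • m₀ := by rw [← hr]; rfl
    have hx2 : x.2 = r • n₀ := by rw [← hr]; rfl
    have h2 : x.2 = 0 := by rw [hx2]; exact key r (hx1 ▸ hker)
    have : x = 0 := Prod.ext hker h2
    simp [this]
  have hsurj1 : Function.Surjective p1 := by
    rw [← LinearMap.range_eq_top]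
    rcases eq_bot_or_eq_top (LinearMap.range p1) with hb | ht
    · exfalso
      have : p1 ⟨(m₀, n₀), hmemG⟩ ∈ LinearMap.range p1 := LinearMap.mem_range_self _ _
      rw [hb, Submodule.mem_bot] at this
      exact hm₀ this
    · exact ht
  set eq1 : G ≃ₗ[R] M := LinearEquiv.ofBijective p1 ⟨hinj1, hsurj1⟩ with heq1
  set f : M →ₗ[R] N := p2 ∘ₗ (eq1.symm : M →ₗ[R] G) with hf
  have hfm₀ : f m₀ = n₀ := by
    have : eq1.symm m₀ = ⟨(m₀, n₀), hmemG⟩ := by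
      apply eq1.injective
      rw [LinearEquiv.apply_symm_apply]
      rfl
    simp only [hf, LinearMap.coe_comp, LinearEquiv.coe_coe, Function.comp_apply, this]
    rfl
  have hfne : f ≠ 0 := by
    intro h
    rw [h] at hfm₀
    exact hn₀ (by simpa using hfm₀.symm)
  rcases f.bijective_or_eq_zero with hbij | h0
  · exact ⟨LinearEquiv.ofBijective f hbij⟩
  · exact absurd h0 hfne
end

section
/- Let K be a group and let (ρ, E) be a finite-dimensional irreducible complex representation of K equipped with a K-invariant inner product ⟨·,·⟩_E (so ⟨ρ(k)x, ρ(k)y⟩_E = ⟨x,y⟩_E for all k ∈ K). Let M be a complex vector space and let B be a sesquilinear form on M ⊗_ℂ E that is invariant under the action of K by id_M ⊗ ρ, i.e., B((id⊗ρ(k))u, (id⊗ρ(k))u') = B(u,u') for all k ∈ K. Then there exists a unique sesquilinear form s on M such that B(m ⊗ x, m' ⊗ x') = s(m, m')·⟨x, x'⟩_E for all m, m' ∈ M and x, x' ∈ E. Moreover, if B is hermitian, then s is hermitian. -/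
/-!
Write a `K`-invariant sesquilinear form `F` on `E` as `F x y = ⟪T x, y⟫`. Since `ρ` is unitary,
`T` commutes with every `ρ k`, so by Schur's lemma `T` is a scalar and `F` is a multiple of the
inner product. Applied to `x y ↦ B (m ⊗ x) (m' ⊗ y)` for fixed `m, m'`, this gives the
factorization, and evaluating at a unit vector `x₀` forces `s m m' = B (m ⊗ x₀) (m' ⊗ x₀)`, which
yields both uniqueness and hermitian symmetry.
-/

open TensorProduct

namespace Representation

variable {k G V : Type*} [Field k] [Monoid G] [AddCommGroup V] [Module k V]

theorem isIrreducible_of_forall_eq_bot_or_eq_top [Nontrivial V] (ρ : Representation k G V)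
    (h : ∀ U : Submodule k V, (∀ g, ∀ x ∈ U, ρ g x ∈ U) → U = ⊥ ∨ U = ⊤) : ρ.IsIrreducible where
  exists_pair_ne := ⟨⊥, ⊤, fun h' => bot_ne_top (congrArg Subrepresentation.toSubmodule h')⟩
  eq_bot_or_eq_top U := (h U.toSubmodule fun g _ hx => U.apply_mem_toSubmodule g hx).imp
    (fun h' => Subrepresentation.toSubmodule_injective h')
    (fun h' => Subrepresentation.toSubmodule_injective h')

theorem exists_eq_smul_one_of_commute [IsAlgClosed k] [FiniteDimensional k V]
    (ρ : Representation k G V) [ρ.IsIrreducible] (T : Module.End k V)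
    (hT : ∀ g x, T (ρ g x) = ρ g (T x)) : ∃ c : k, T = c • 1 := by
  obtain ⟨c, hc⟩ := IsIrreducible.algebraMap_intertwiningMap_bijective_of_isAlgClosed.surjective
    (T.intertwiningMap_of_isIntertwiningMap ρ ρ hT)
  exact ⟨c, (congrArg IntertwiningMap.toLinearMap hc).symm⟩

end Representation

theorem exists_linearMap_inner_left_eq {𝕜 E : Type*} [RCLike 𝕜] [NormedAddCommGroup E]
    [InnerProductSpace 𝕜 E] [FiniteDimensional 𝕜 E] (F : E →ₗ⋆[𝕜] E →ₗ[𝕜] 𝕜) :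
    ∃ T : E →ₗ[𝕜] E, ∀ x y, inner 𝕜 (T x) y = F x y := by
  have := FiniteDimensional.complete 𝕜 E
  exact ⟨(InnerProductSpace.toDual 𝕜 E).symm.toLinearEquiv.toLinearMap.comp
      ((LinearMap.toContinuousLinearMap : (E →ₗ[𝕜] 𝕜) ≃ₗ[𝕜] _).toLinearMap.comp F),
    fun x y => by simp⟩

section UnitaryIrreducible

variable {K E : Type*} [Group K] [NormedAddCommGroup E] [InnerProductSpace ℂ E]
  [FiniteDimensional ℂ E] (ρ : Representation ℂ K E) [ρ.IsIrreducible]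
  (hρ : ∀ (k : K) (x y : E), inner ℂ (ρ k x) (ρ k y) = (inner ℂ x y : ℂ))
include hρ

theorem exists_eq_mul_inner_of_invariant (F : E →ₗ⋆[ℂ] E →ₗ[ℂ] ℂ)
    (hF : ∀ (k : K) (x y : E), F (ρ k x) (ρ k y) = F x y) :
    ∃ c : ℂ, ∀ x y, F x y = c * inner ℂ x y := by
  obtain ⟨T, hT⟩ := exists_linearMap_inner_left_eq F
  have hcomm : ∀ k x, T (ρ k x) = ρ k (T x) := fun k x =>
    ext_inner_right ℂ fun y => by rw [← ρ.self_inv_apply k y, hT, hF, hρ, hT]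
  obtain ⟨c, rfl⟩ := ρ.exists_eq_smul_one_of_commute T hcomm
  exact ⟨starRingEnd ℂ c, fun x y => by simp [← hT, inner_smul_left]⟩

theorem apply_tmul_tmul_eq_mul_inner {M : Type*} [AddCommGroup M] [Module ℂ M]
    (B : (M ⊗[ℂ] E) →ₗ⋆[ℂ] (M ⊗[ℂ] E) →ₗ[ℂ] ℂ)
    (hB : ∀ (k : K) (u u' : M ⊗[ℂ] E),
      B (TensorProduct.map LinearMap.id (ρ k) u) (TensorProduct.map LinearMap.id (ρ k) u') = B u u')
    {x₀ : E} (hx₀ : inner ℂ x₀ x₀ = (1 : ℂ)) (m m' : M) (x x' : E) :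
    B (m ⊗ₜ x) (m' ⊗ₜ x') = B (m ⊗ₜ x₀) (m' ⊗ₜ x₀) * inner ℂ x x' := by
  obtain ⟨c, hc⟩ := exists_eq_mul_inner_of_invariant ρ hρ
    ((B.comp (TensorProduct.mk ℂ M E m)).compl₂ (TensorProduct.mk ℂ M E m'))
    fun k x y => by simpa using hB k (m ⊗ₜ x) (m' ⊗ₜ y)
  have hc' : ∀ x y, B (m ⊗ₜ x) (m' ⊗ₜ y) = c * inner ℂ x y := hc
  rw [hc', hc', hx₀, mul_one]

end UnitaryIrreducible

theorem eq_apply_tmul_tmul_of_forall_eq_mul_inner {E M : Type*} [Inner ℂ E] [AddCommGroup E]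
    [Module ℂ E] [AddCommGroup M] [Module ℂ M] {B : M ⊗[ℂ] E → M ⊗[ℂ] E → ℂ} {s : M → M → ℂ}
    (hs : ∀ m m' x x', B (m ⊗ₜ x) (m' ⊗ₜ x') = s m m' * inner ℂ x x')
    {x₀ : E} (hx₀ : inner ℂ x₀ x₀ = (1 : ℂ)) (m m' : M) :
    s m m' = B (m ⊗ₜ x₀) (m' ⊗ₜ x₀) := by
  rw [hs, hx₀, mul_one]

/-- Let `(ρ, E)` be a finite-dimensional irreducible unitary representation of a group `K`,
`M` a complex vector space, and `B` a sesquilinear form on `M ⊗ E` invariant under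
`id ⊗ ρ(k)` for all `k`. Then there is a unique sesquilinear form `s` on `M` with
`B (m ⊗ x) (m' ⊗ x') = s m m' * ⟪x, x'⟫`; moreover if `B` is hermitian then so is `s`. -/
theorem isotypic_form_factorization {K : Type*} [Group K]
    {E : Type*} [NormedAddCommGroup E] [InnerProductSpace ℂ E] [FiniteDimensional ℂ E]
    (ρ : Representation ℂ K E)
    (hρ_unitary : ∀ (k : K) (x y : E), (inner ℂ (ρ k x) (ρ k y) : ℂ) = inner ℂ x y)
    (hρ_nontriv : Nontrivial E)
    (hρ_irred : ∀ U : Submodule ℂ E, (∀ (k : K), ∀ x ∈ U, ρ k x ∈ U) → U = ⊥ ∨ U = ⊤)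
    {M : Type*} [AddCommGroup M] [Module ℂ M]
    (B : (M ⊗[ℂ] E) → (M ⊗[ℂ] E) → ℂ)
    (hB_add_left : ∀ u u' w, B (u + u') w = B u w + B u' w)
    (hB_smul_left : ∀ (c : ℂ) u w, B (c • u) w = starRingEnd ℂ c * B u w)
    (hB_add_right : ∀ u w w', B u (w + w') = B u w + B u w')
    (hB_smul_right : ∀ (c : ℂ) u w, B u (c • w) = c * B u w)
    (hB_K_invariant : ∀ (k : K) (u u' : M ⊗[ℂ] E),
      B (TensorProduct.map LinearMap.id (ρ k) u) (TensorProduct.map LinearMap.id (ρ k) u')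
        = B u u') :
    (∃! s : M →ₛₗ[starRingEnd ℂ] M →ₗ[ℂ] ℂ,
      ∀ (m m' : M) (x x' : E),
        B (m ⊗ₜ[ℂ] x) (m' ⊗ₜ[ℂ] x') = s m m' * (inner ℂ x x' : ℂ)) ∧
    ((∀ u u', B u' u = starRingEnd ℂ (B u u')) →
      ∀ s : M →ₛₗ[starRingEnd ℂ] M →ₗ[ℂ] ℂ,
        (∀ (m m' : M) (x x' : E),
          B (m ⊗ₜ[ℂ] x) (m' ⊗ₜ[ℂ] x') = s m m' * (inner ℂ x x' : ℂ)) →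
        ∀ m m' : M, s m' m = starRingEnd ℂ (s m m')) := by
  have := hρ_nontriv
  have := ρ.isIrreducible_of_forall_eq_bot_or_eq_top hρ_irred
  obtain ⟨x₀, hx₀⟩ : ∃ x₀ : E, inner ℂ x₀ x₀ = (1 : ℂ) := by
    obtain ⟨x₀, hx₀⟩ := exists_norm_eq E zero_le_one
    exact ⟨x₀, by simp [inner_self_eq_norm_sq_to_K, hx₀]⟩
  let B' : (M ⊗[ℂ] E) →ₗ⋆[ℂ] (M ⊗[ℂ] E) →ₗ[ℂ] ℂ :=
    LinearMap.mk₂'ₛₗ _ _ B hB_add_left hB_smul_left hB_add_right hB_smul_right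
  let s : M →ₛₗ[starRingEnd ℂ] M →ₗ[ℂ] ℂ :=
    (B'.comp ((TensorProduct.mk ℂ M E).flip x₀)).compl₂ ((TensorProduct.mk ℂ M E).flip x₀)
  have hs : ∀ m m' x x', B (m ⊗ₜ[ℂ] x) (m' ⊗ₜ[ℂ] x') = s m m' * (inner ℂ x x' : ℂ) :=
    apply_tmul_tmul_eq_mul_inner ρ hρ_unitary B' hB_K_invariant hx₀
  refine ⟨⟨s, hs, fun s' hs' => ?_⟩, fun hB_herm s' hs' m m' => ?_⟩
  · ext m m'
    exact eq_apply_tmul_tmul_of_forall_eq_mul_inner hs' hx₀ m m'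
  · rw [eq_apply_tmul_tmul_of_forall_eq_mul_inner hs' hx₀,
      eq_apply_tmul_tmul_of_forall_eq_mul_inner hs' hx₀, hB_herm]
end

section
/- Let V be a finite-dimensional complex vector space, let S ⊆ ℝ be a preconnected set, and let (B_t)_{t∈ℝ} be a family of hermitian sesquilinear forms on V such that for each pair v, w ∈ V the function t ↦ B_t(v,w) is continuous. If B_t is nondegenerate for every t ∈ S, then the positive index p(B_t) and the negative index q(B_t) are constant functions of t on S. -/
/-- The positive index of a form `B` on a complex vector space `W`: the maximal dimension
of a subspace on which `B` is positive definite. -/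
noncomputable def posIndex {W : Type*} [AddCommGroup W] [Module ℂ W] (B : W → W → ℂ) : ℕ :=
  sSup {k : ℕ | ∃ U : Submodule ℂ W, Module.finrank ℂ ↥U = k ∧
    ∀ x ∈ U, x ≠ 0 → 0 < (B x x).re ∧ (B x x).im = 0}

/-- The negative index of a form `B` on a complex vector space `W`: the maximal dimension
of a subspace on which `B` is negative definite. -/
noncomputable def negIndex {W : Type*} [AddCommGroup W] [Module ℂ W] (B : W → W → ℂ) : ℕ :=
  sSup {k : ℕ | ∃ U : Submodule ℂ W, Module.finrank ℂ ↥U = k ∧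
    ∀ x ∈ U, x ≠ 0 → (B x x).re < 0 ∧ (B x x).im = 0}

/-!
A maximal positive definite subspace for `B_t` stays positive definite for `B_s` with `s` near
`t`: on a fixed finite-dimensional subspace, positivity of a continuous family of quadratic
forms on the unit sphere is an open condition. So `p` and, applied to `-B`, `q` are lower
semicontinuous. Always `p + q ≤ dim V` (a positive and a negative definite subspace meet in
`0`), with equality when the form is nondegenerate (diagonalise the hermitian Gram matrix). At a
point of `S` both indices can therefore only stay constant nearby, and a locally constant
function on a preconnected set is constant.
-/

open Module Filter Topology ComplexConjugate Matrix

section Index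

variable {V : Type*} [AddCommGroup V] [Module ℂ V]

def IsPosDefOn (B : V → V → ℂ) (U : Submodule ℂ V) : Prop :=
  ∀ x ∈ U, x ≠ 0 → 0 < (B x x).re ∧ (B x x).im = 0

lemma IsPosDefOn.disjoint_neg {B : V → V → ℂ} {U W : Submodule ℂ V} (hU : IsPosDefOn B U)
    (hW : IsPosDefOn (-B) W) : Disjoint U W := by
  rw [Submodule.disjoint_def]
  intro x hxU hxW
  by_contra hx0
  have hneg := (hW x hxW hx0).1
  simp only [Pi.neg_apply, Complex.neg_re, neg_pos] at hneg
  exact (hU x hxU hx0).1.not_gt hneg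

lemma negIndex_eq_posIndex_neg (B : V → V → ℂ) : negIndex B = posIndex (-B) := by
  simp only [negIndex, posIndex, Pi.neg_apply, Complex.neg_re, Complex.neg_im, neg_pos,
    neg_eq_zero]

variable [FiniteDimensional ℂ V]

lemma bddAbove_finrank_isPosDefOn (B : V → V → ℂ) :
    BddAbove {k : ℕ | ∃ U : Submodule ℂ V, finrank ℂ U = k ∧ IsPosDefOn B U} :=
  ⟨finrank ℂ V, by rintro k ⟨U, rfl, -⟩; exact U.finrank_le⟩

lemma exists_isPosDefOn_finrank_eq_posIndex (B : V → V → ℂ) :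
    ∃ U : Submodule ℂ V, finrank ℂ U = posIndex B ∧ IsPosDefOn B U :=
  Nat.sSup_mem (s := {k : ℕ | ∃ U : Submodule ℂ V, finrank ℂ U = k ∧ IsPosDefOn B U})
    ⟨0, ⊥, finrank_bot ℂ V, fun _ hx hx0 => absurd ((Submodule.mem_bot ℂ).mp hx) hx0⟩
    (bddAbove_finrank_isPosDefOn B)

lemma IsPosDefOn.finrank_le_posIndex {B : V → V → ℂ} {U : Submodule ℂ V}
    (hU : IsPosDefOn B U) : finrank ℂ U ≤ posIndex B :=
  le_csSup (bddAbove_finrank_isPosDefOn B) ⟨U, rfl, hU⟩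

lemma posIndex_add_posIndex_neg_le (B : V → V → ℂ) :
    posIndex B + posIndex (-B) ≤ finrank ℂ V := by
  obtain ⟨U, hUrank, hU⟩ := exists_isPosDefOn_finrank_eq_posIndex B
  obtain ⟨W, hWrank, hW⟩ := exists_isPosDefOn_finrank_eq_posIndex (-B)
  rw [← hUrank, ← hWrank, ← Submodule.finrank_sup_add_finrank_inf_eq,
    disjoint_iff.mp (hU.disjoint_neg hW), finrank_bot, add_zero]
  exact Submodule.finrank_le _

end Index

section Sesquilinear

variable {V : Type*} [AddCommGroup V] [Module ℂ V] {B : V →ₗ⋆[ℂ] V →ₗ[ℂ] ℂ}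

lemma LinearMap.IsSymm.im_apply_self (hB : B.IsSymm) (x : V) : (B x x).im = 0 :=
  Complex.conj_eq_iff_im.mp (hB.eq x x)

lemma LinearMap.IsSymm.neg (hB : B.IsSymm) : (-B).IsSymm :=
  ⟨fun x y => by simp [hB.eq x y]⟩

lemma LinearMap.apply_sum_smul_sum_smul (B : V →ₗ⋆[ℂ] V →ₗ[ℂ] ℂ) {ι : Type*} [Fintype ι]
    (c d : ι → ℂ) (u : ι → V) :
    B (∑ i, c i • u i) (∑ j, d j • u j) = ∑ i, ∑ j, conj (c i) * d j * B (u i) (u j) := by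
  simp only [map_sum, map_smulₛₗ, LinearMap.sum_apply, LinearMap.smul_apply,
    RingHom.id_apply, smul_eq_mul, Finset.mul_sum]
  rw [Finset.sum_comm]
  exact Finset.sum_congr rfl fun _ _ => Finset.sum_congr rfl fun _ _ => by ring

lemma LinearMap.IsOrthoᵢ.isPosDefOn_span {ι : Type*} [Fintype ι] (hB : B.IsSymm) {f : ι → V}
    (hf : B.IsOrthoᵢ f) (hpos : ∀ i, 0 < (B (f i) (f i)).re) :
    IsPosDefOn (B · ·) (Submodule.span ℂ (Set.range f)) := by
  rintro x hx hx0
  refine ⟨?_, hB.im_apply_self x⟩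
  obtain ⟨c, rfl⟩ := Submodule.mem_span_range_iff_exists_fun ℂ |>.mp hx
  have hdiag : B (∑ i, c i • f i) (∑ j, c j • f j) =
      ∑ i, (Complex.normSq (c i) : ℂ) * B (f i) (f i) := by
    rw [B.apply_sum_smul_sum_smul]
    refine Finset.sum_congr rfl fun i _ => ?_
    rw [Fintype.sum_eq_single i fun j hji => by rw [hf hji.symm, mul_zero],
      Complex.normSq_eq_conj_mul_self]
  obtain ⟨i, hi⟩ : ∃ i, c i ≠ 0 := by
    by_contra! hc
    exact hx0 (by simp [hc])
  beta_reduce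
  rw [hdiag, Complex.re_sum]
  refine Finset.sum_pos' (fun j _ => ?_) ⟨i, Finset.mem_univ i, ?_⟩
  · rw [Complex.re_ofReal_mul]
    exact mul_nonneg (Complex.normSq_nonneg _) (hpos j).le
  · rw [Complex.re_ofReal_mul]
    exact mul_pos (Complex.normSq_pos.mpr hi) (hpos i)

lemma LinearMap.IsSymm.exists_basis_isOrthoᵢ [FiniteDimensional ℂ V] (hB : B.IsSymm) :
    ∃ f : Basis (Fin (finrank ℂ V)) ℂ V, B.IsOrthoᵢ f := by
  let b := Module.finBasis ℂ V
  let G : Matrix (Fin (finrank ℂ V)) (Fin (finrank ℂ V)) ℂ := of fun i j => B (b i) (b j)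
  have hG : G.IsHermitian := Matrix.IsHermitian.ext fun i j => hB.eq (b j) (b i)
  -- Eigenvectors of the hermitian Gram matrix, read as coordinate vectors in the basis `b`.
  let v := hG.eigenvectorBasis
  let f := v.toBasis.map ((WithLp.linearEquiv 2 ℂ _).trans b.equivFun.symm)
  refine ⟨f, fun j k hjk => ?_⟩
  calc B (f j) (f k) = ∑ a, conj (v j a) * (G *ᵥ v k) a := by
        simp only [f, Basis.map_apply, LinearEquiv.trans_apply, Basis.equivFun_symm_apply,
          B.apply_sum_smul_sum_smul, mulVec, dotProduct, Finset.mul_sum,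
          WithLp.coe_linearEquiv, OrthonormalBasis.coe_toBasis, G, of_apply]
        exact Finset.sum_congr rfl fun _ _ => Finset.sum_congr rfl fun _ _ => by ring
    _ = hG.eigenvalues k * inner ℂ (v j) (v k) := by
        simp only [v, hG.mulVec_eigenvectorBasis k, EuclideanSpace.inner_eq_star_dotProduct,
          dotProduct, Finset.mul_sum, Pi.smul_apply, Complex.real_smul, Pi.star_apply,
          Complex.star_def]
        exact Finset.sum_congr rfl fun _ _ => by ring
    _ = 0 := by rw [v.orthonormal.2 hjk, mul_zero]

lemma LinearMap.IsSymm.posIndex_add_posIndex_neg_eq_finrank [FiniteDimensional ℂ V] (hB : B.IsSymm)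
    (hB' : B.SeparatingLeft) : posIndex (B · ·) + posIndex ((-B) · ·) = finrank ℂ V := by
  obtain ⟨f, hf⟩ := hB.exists_basis_isOrthoᵢ
  let μ : Fin (finrank ℂ V) → ℝ := fun i => (B (f i) (f i)).re
  have hμ : ∀ i, μ i ≠ 0 := fun i hi =>
    hf.not_isOrtho_basis_self_of_separatingLeft hB' i (Complex.ext hi (hB.im_apply_self _))
  let P := {i // 0 < μ i}
  let N := {i // ¬ 0 < μ i}
  have hP : IsPosDefOn (B · ·) (Submodule.span ℂ (Set.range fun i : P => f i)) :=
    LinearMap.IsOrthoᵢ.isPosDefOn_span hB (fun i j hij => hf (Subtype.val_injective.ne hij))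
      fun i => i.2
  have hN : IsPosDefOn ((-B) · ·) (Submodule.span ℂ (Set.range fun i : N => f i)) :=
    LinearMap.IsOrthoᵢ.isPosDefOn_span hB.neg
      (fun i j hij => neg_eq_zero.mpr (hf (Subtype.val_injective.ne hij)))
      fun i => by simpa using lt_of_le_of_ne (not_lt.mp i.2) (hμ i)
  have hcard : Fintype.card P + Fintype.card N = finrank ℂ V := by
    rw [← Fintype.card_sum, Fintype.card_congr (Equiv.sumCompl fun i => 0 < μ i),
      Fintype.card_fin]
  refine le_antisymm (posIndex_add_posIndex_neg_le _) ?_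
  calc finrank ℂ V = Fintype.card P + Fintype.card N := hcard.symm
    _ ≤ posIndex (B · ·) + posIndex ((-B) · ·) := by
      rw [← finrank_span_eq_card (f.linearIndependent.comp (·.1 : P → _) Subtype.val_injective),
        ← finrank_span_eq_card (f.linearIndependent.comp (·.1 : N → _) Subtype.val_injective)]
      exact add_le_add hP.finrank_le_posIndex hN.finrank_le_posIndex

end Sesquilinear

lemma eventually_forall_pos_of_homogeneous {X E : Type*} [TopologicalSpace X]
    [NormedAddCommGroup E] [NormedSpace ℝ E] [ProperSpace E] {q : X → E → ℝ}
    (hq : Continuous (Function.uncurry q)) (hhom : ∀ s (r : ℝ) c, q s (r • c) = r ^ 2 * q s c)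
    {t : X} (ht : ∀ c ≠ 0, 0 < q t c) : ∀ᶠ s in 𝓝 t, ∀ c ≠ 0, 0 < q s c := by
  have hsphere : ∀ᶠ s in 𝓝 t, ∀ c ∈ Metric.sphere (0 : E) 1, 0 < q s c :=
    (isCompact_sphere 0 1).eventually_forall_of_forall_eventually fun c hc =>
      (hq.tendsto (t, c)).eventually
        (eventually_gt_nhds (ht c (ne_zero_of_mem_sphere one_ne_zero ⟨c, hc⟩)))
  filter_upwards [hsphere] with s hs c hc
  have hnorm : 0 < ‖c‖ := norm_pos_iff.mpr hc
  have hunit := hs (‖c‖⁻¹ • c) (by simp [norm_smul, hnorm.ne'])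
  rw [hhom] at hunit
  exact pos_of_mul_pos_right hunit (sq_nonneg _)

section Continuity

variable {X V : Type*} [TopologicalSpace X] [AddCommGroup V] [Module ℂ V]
  [FiniteDimensional ℂ V] (B : X → V →ₗ⋆[ℂ] V →ₗ[ℂ] ℂ)

lemma IsPosDefOn.eventually_nhds (hB : ∀ s, (B s).IsSymm)
    (hcont : ∀ v w, Continuous fun s => B s v w) {t : X} {U : Submodule ℂ V}
    (hU : IsPosDefOn (B t · ·) U) : ∀ᶠ s in 𝓝 t, IsPosDefOn (B s · ·) U := by
  let u := Module.finBasis ℂ U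
  let L : (Fin (finrank ℂ U) → ℂ) → V := fun c => ∑ i, c i • (u i : V)
  have hLU : ∀ c, L c ∈ U := fun c => U.sum_mem fun i _ => U.smul_mem _ (u i).2
  have hL0 : ∀ c, L c = 0 → c = 0 := fun c hc => funext <|
    Fintype.linearIndependent_iff.mp (u.linearIndependent.map' U.subtype U.ker_subtype) c hc
  have hLsurj : ∀ x ∈ U, ∃ c, L c = x := fun x hx =>
    ⟨u.equivFun ⟨x, hx⟩, by
      simpa only [Submodule.coe_sum, Submodule.coe_smul] using
        congrArg Subtype.val (u.sum_equivFun ⟨x, hx⟩)⟩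
  have hquad : Continuous fun p : X × (Fin (finrank ℂ U) → ℂ) =>
      (B p.1 (L p.2) (L p.2)).re := by
    simp only [L, LinearMap.apply_sum_smul_sum_smul]
    fun_prop
  have hhom : ∀ s (r : ℝ) c,
      (B s (L (r • c)) (L (r • c))).re = r ^ 2 * (B s (L c) (L c)).re := by
    intro s r c
    have : L (r • c) = (r : ℂ) • L c := by simp [L, Finset.smul_sum, smul_smul]
    rw [this, LinearMap.map_smulₛₗ₂, LinearMap.map_smul, smul_eq_mul, smul_eq_mul, ← mul_assoc,
      Complex.conj_ofReal, ← Complex.ofReal_mul, Complex.re_ofReal_mul, sq]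
  filter_upwards [eventually_forall_pos_of_homogeneous (q := fun s c => (B s (L c) (L c)).re)
    hquad hhom fun c hc => (hU _ (hLU c) (mt (hL0 c) hc)).1] with s hs x hx hx0
  obtain ⟨c, rfl⟩ := hLsurj x hx
  exact ⟨hs c (mt (by rintro rfl; simp [L]) hx0), (hB s).im_apply_self _⟩

lemma eventually_posIndex_le (hB : ∀ s, (B s).IsSymm)
    (hcont : ∀ v w, Continuous fun s => B s v w) (t : X) :
    ∀ᶠ s in 𝓝 t, posIndex (B t · ·) ≤ posIndex (B s · ·) := by
  obtain ⟨U, hrank, hU⟩ := exists_isPosDefOn_finrank_eq_posIndex (B t · ·)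
  filter_upwards [hU.eventually_nhds B hB hcont] with s hs
  exact hrank ▸ hs.finrank_le_posIndex

lemma eventually_posIndex_eq (hB : ∀ s, (B s).IsSymm)
    (hcont : ∀ v w, Continuous fun s => B s v w) {t : X} (ht : (B t).SeparatingLeft) :
    ∀ᶠ s in 𝓝 t, posIndex (B s · ·) = posIndex (B t · ·) ∧
      posIndex ((-B s) · ·) = posIndex ((-B t) · ·) := by
  have hsum := (hB t).posIndex_add_posIndex_neg_eq_finrank ht
  filter_upwards [eventually_posIndex_le B hB hcont t,
    eventually_posIndex_le (fun s => -B s) (fun s => (hB s).neg) (fun v w => (hcont v w).neg) t]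
    with s hpos hneg
  have hle : posIndex (B s · ·) + posIndex ((-B s) · ·) ≤ finrank ℂ V :=
    posIndex_add_posIndex_neg_le _
  exact ⟨by omega, by omega⟩

end Continuity

lemma IsPreconnected.eq_of_eventually_eq {α β : Type*} [TopologicalSpace α] {S : Set α}
    (hS : IsPreconnected S) {f : α → β} (hf : ∀ t ∈ S, ∀ᶠ s in 𝓝 t, f s = f t) {x y : α}
    (hx : x ∈ S) (hy : y ∈ S) : f x = f y := by
  let _ : TopologicalSpace β := ⊥
  have : DiscreteTopology β := ⟨rfl⟩
  refine hS.constant (fun t ht => ContinuousAt.continuousWithinAt ?_) hx hy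
  rw [ContinuousAt, nhds_discrete β, tendsto_pure]
  exact hf t ht

/-- Let `(B_t)` be a continuous family of hermitian sesquilinear forms on a
finite-dimensional complex vector space `V`, and let `S ⊆ ℝ` be preconnected. If `B_t` is
nondegenerate for every `t ∈ S`, then the positive and negative indices of `B_t` are
constant on `S`. -/
theorem signature_constant_on_preconnected {V : Type*} [AddCommGroup V] [Module ℂ V]
    [FiniteDimensional ℂ V]
    (B : ℝ → V → V → ℂ)
    (hB_add_left : ∀ (t : ℝ) (v v' w : V), B t (v + v') w = B t v w + B t v' w)
    (hB_smul_left : ∀ (t : ℝ) (c : ℂ) (v w : V), B t (c • v) w = starRingEnd ℂ c * B t v w)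
    (hB_add_right : ∀ (t : ℝ) (v w w' : V), B t v (w + w') = B t v w + B t v w')
    (hB_smul_right : ∀ (t : ℝ) (c : ℂ) (v w : V), B t v (c • w) = c * B t v w)
    (hB_herm : ∀ (t : ℝ) (v w : V), B t w v = starRingEnd ℂ (B t v w))
    (hB_cont : ∀ v w : V, Continuous fun t : ℝ => B t v w)
    (S : Set ℝ) (hS : IsPreconnected S)
    (hB_nondeg : ∀ t ∈ S, ∀ v : V, (∀ w : V, B t v w = 0) → v = 0) :
    ∀ s ∈ S, ∀ t ∈ S,
      posIndex (B s) = posIndex (B t) ∧ negIndex (B s) = negIndex (B t) := by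
  let form : ℝ → V →ₗ⋆[ℂ] V →ₗ[ℂ] ℂ := fun t => LinearMap.mk₂'ₛₗ _ _ (B t) (hB_add_left t)
    (hB_smul_left t) (hB_add_right t) (hB_smul_right t)
  have hsymm : ∀ t, (form t).IsSymm := fun t => ⟨fun v w => (hB_herm t v w).symm⟩
  have hneg : ∀ t, negIndex (B t) = posIndex ((-form t) · ·) := fun t =>
    negIndex_eq_posIndex_neg (B t)
  have hloc : ∀ t ∈ S, ∀ᶠ s in 𝓝 t,
      (posIndex (B s), negIndex (B s)) = (posIndex (B t), negIndex (B t)) := fun t ht => by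
    filter_upwards [eventually_posIndex_eq form hsymm hB_cont (hB_nondeg t ht)] with s hs
    rw [Prod.mk.injEq, hneg, hneg]
    exact hs
  exact fun s hs t ht => Prod.ext_iff.mp <|
    hS.eq_of_eventually_eq (f := fun t => (posIndex (B t), negIndex (B t))) hloc hs ht
end
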